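/- Let Ω be a locally compact, non-compact Hausdorff space such that C₀(Ω) is separable, let α be an aperiodic homeomorphism of Ω, and let w be a continuous positive function on Ω such that w and w⁻¹ = 1/w are bounded, so that T̃_{α,w}(f) = w·(f∘α) is an invertible bounded linear operator on C₀(Ω). Then T̃_{α,w} is supercyclic on C₀(Ω) if and only if for every compact subset K of Ω there exists a strictly increasing sequence (n_k) of natural numbers such that lim_{k→∞} [ ( sup_{t∈K} ∏_{j=0}^{n_k−1} w(α^{j−n_k}(t)) ) · ( sup_{t∈K} ∏_{j=0}^{n_k−1} (w(α^j(t)))⁻¹ ) ] = 0. -/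

import Mathlib

/-!
Sufficiency is the Supercyclicity Criterion. For `x`, `y` vanishing off a compact `K`,
`‖T ^ n x‖ ≤ A_n ‖x‖` and `‖S ^ n y‖ ≤ B_n ‖y‖`, where `A_n`, `B_n` are the two suprema over `K`
(evaluate `T ^ n x` at `t` as `A_n(α^n t) x(α^n t)`, and `S ^ n y` through `T ^ n S ^ n y = y`);
so `A_n B_n → 0` lets `x + c⁻¹ • S ^ n y` link a neighbourhood of `x` to one of `y`.

Necessity: let `h ∈ C₀(Ω)` be `1` on `K` with compact support `L`, and let `n` exceed the
aperiodicity index of `L`, so that `h` vanishes on `α^n K` and `α^{-n} K`. If `f` and `c • T ^ n f`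
are both `ε`-close to `h`, evaluating `c • T ^ n f` at `α^{-n} t` and at `t` (for `t ∈ K`) gives
`A_n ≤ ε / ((1 - ε) ‖c‖)` and `B_n ≤ ‖c‖ ε / (1 - ε)`. Such `n` can be found arbitrarily large
because the projective orbit of a supercyclic vector is dense while finitely many lines are
closed and nowhere dense in `C₀(Ω)`, which is not itself a line once `Ω` has two points.
-/

open scoped ZeroAtInfty
open Filter Finset

/-- A bounded linear operator `T` on a complex normed space is *supercyclic* if the
set of its supercyclic vectors, i.e. vectors `f` such that
`{ λ • T^n f : n ∈ ℕ, λ ∈ ℂ \ {0} }` is dense, is itself dense. -/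
def IsSupercyclic {E : Type*} [NormedAddCommGroup E] [NormedSpace ℂ E]
    (T : E →L[ℂ] E) : Prop :=
  Dense {f : E | Dense {y : E | ∃ (n : ℕ) (lam : ℂ), 1 ≤ n ∧ lam ≠ 0 ∧
    y = lam • (T ^ n) f}}

open Set Topology

theorem Function.LeftInverse.iterate_iterate_of_le {X : Type*} {f g : X → X}
    (h : Function.LeftInverse f g) {m n : ℕ} (hmn : m ≤ n) (x : X) :
    f^[m] (g^[n] x) = g^[n - m] x := by
  obtain ⟨k, rfl⟩ := Nat.exists_eq_add_of_le hmn
  rw [Function.iterate_add_apply, h.iterate m, Nat.add_sub_cancel_left]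

theorem exists_strictMono_tendsto_zero {G : ℕ → ℝ} (hG : ∀ n, 0 ≤ G n)
    (h : ∀ δ > 0, ∀ M, ∃ n > M, G n < δ) :
    ∃ n : ℕ → ℕ, StrictMono n ∧ (∀ k, 1 ≤ n k) ∧ Tendsto (fun k => G (n k)) atTop (𝓝 0) := by
  obtain ⟨φ, hφ, hP⟩ := extraction_forall_of_frequently
    (P := fun k n => 0 < n ∧ G n < 1 / ((k : ℝ) + 1)) fun k =>
      frequently_atTop'.2 fun M =>
        let ⟨n, hMn, hGn⟩ := h _ Nat.one_div_pos_of_nat M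
        ⟨n, hMn, by omega, hGn⟩
  exact ⟨φ, hφ, fun k => (hP k).1,
    squeeze_zero (fun k => hG _) (fun k => (hP k).2.le) tendsto_one_div_add_atTop_nhds_zero_nat⟩

theorem exists_pos_mul_lt_of_mul_lt_sq {a b δ : ℝ} (ha : 0 ≤ a) (hb : 0 ≤ b) (hδ : 0 < δ)
    (h : a * b < δ ^ 2) : ∃ c > 0, c * a < δ ∧ b < c * δ := by
  rcases ha.eq_or_lt with rfl | ha
  · refine ⟨b / δ + 1, by positivity, by simpa using hδ, ?_⟩
    rw [add_mul, div_mul_cancel₀ b hδ.ne']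
    linarith
  · obtain ⟨c, hbc, hca⟩ := exists_between (show b / δ < δ / a by
      rw [div_lt_div_iff₀ hδ ha]; nlinarith)
    exact ⟨c, (div_nonneg hb hδ.le).trans_lt hbc, (lt_div_iff₀ ha).1 hca,
      (div_lt_iff₀ hδ).1 hbc⟩

theorem sSup_image_nonneg {X : Type*} {g : X → ℝ} (hg : ∀ x, 0 ≤ g x) {s : Set X} :
    0 ≤ sSup (g '' s) :=
  Real.sSup_nonneg (forall_mem_image.2 fun x _ => hg x)

section Supercyclic

variable {E : Type*} [NormedAddCommGroup E] [NormedSpace ℂ E]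

def projectiveOrbit (T : E →L[ℂ] E) (f : E) : Set E :=
  {y | ∃ (n : ℕ) (lam : ℂ), 1 ≤ n ∧ lam ≠ 0 ∧ y = lam • (T ^ n) f}

theorem isOpen_setOf_projectiveOrbit_inter_nonempty (T : E →L[ℂ] E) {V : Set E}
    (hV : IsOpen V) : IsOpen {f | (projectiveOrbit T f ∩ V).Nonempty} := by
  refine isOpen_iff_forall_mem_open.2 ?_
  rintro f ⟨-, ⟨n, c, hn, hc, rfl⟩, hfV⟩
  exact ⟨(fun g => c • (T ^ n) g) ⁻¹' V, fun g hg => ⟨_, ⟨n, c, hn, hc, rfl⟩, hg⟩,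
    hV.preimage (by fun_prop), hfV⟩

/-- By Baire, the supercyclic vectors then contain the dense `G_δ` of vectors whose projective
orbit meets every member of a countable basis. -/
theorem isSupercyclic_of_forall_isOpen [BaireSpace E] [SecondCountableTopology E]
    {T : E →L[ℂ] E}
    (h : ∀ U V : Set E, IsOpen U → IsOpen V → U.Nonempty → V.Nonempty →
      ∃ f ∈ U, (projectiveOrbit T f ∩ V).Nonempty) :
    IsSupercyclic T := by
  obtain ⟨B, hBc, -, hB⟩ := TopologicalSpace.exists_countable_basis E
  set O : Set E → Set E := fun V => {f | (projectiveOrbit T f ∩ V).Nonempty}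
  have hO : Dense (⋂ V ∈ {V ∈ B | V.Nonempty}, O V) :=
    dense_biInter_of_isOpen
      (fun V hV => isOpen_setOf_projectiveOrbit_inter_nonempty T (hB.isOpen hV.1))
      (hBc.mono (sep_subset _ _))
      fun V hV => dense_iff_inter_open.2 fun U hU hUne => h U V hU (hB.isOpen hV.1) hUne hV.2
  refine hO.mono fun f hf => hB.dense_iff.2 fun V hV hVne => ?_
  rw [inter_comm]
  exact mem_iInter₂.1 hf V ⟨hV, hVne⟩

theorem pow_apply_pow_of_leftInverse {T S : E →L[ℂ] E} (hTS : ∀ f, T (S f) = f) (n : ℕ)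
    (f : E) : (T ^ n) ((S ^ n) f) = f := by
  simpa only [FunLike.coe_pow_eq_iterate] using (Function.LeftInverse.iterate hTS n) f

/-- The usual choice of scalars in the Supercyclicity Criterion: `f = x + c⁻¹ • S ^ n y` is
close to `x` while `c • T ^ n f = c • T ^ n x + y` is close to `y`. -/
theorem isSupercyclic_of_norm_mul_norm_lt [BaireSpace E] [SecondCountableTopology E]
    {T S : E →L[ℂ] E} (hTS : ∀ f, T (S f) = f) {D : Set E} (hD : Dense D)
    (h : ∀ x ∈ D, ∀ y ∈ D, ∀ δ > 0, ∃ n ≥ 1, ‖(T ^ n) x‖ * ‖(S ^ n) y‖ < δ) :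
    IsSupercyclic T := by
  refine isSupercyclic_of_forall_isOpen fun U V hU hV ⟨g, hg⟩ ⟨g', hg'⟩ => ?_
  obtain ⟨r, hr, hrU⟩ := Metric.isOpen_iff.1 hU g hg
  obtain ⟨r', hr', hrV⟩ := Metric.isOpen_iff.1 hV g' hg'
  set ε := min r r' / 2 with hε
  have hε0 : 0 < ε := by positivity
  obtain ⟨x, hxD, hx⟩ := hD.exists_dist_lt g hε0
  obtain ⟨y, hyD, hy⟩ := hD.exists_dist_lt g' hε0
  obtain ⟨n, hn, hxy⟩ := h x hxD y hyD (ε ^ 2) (by positivity)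
  obtain ⟨c, hc, hcx, hcy⟩ :=
    exists_pos_mul_lt_of_mul_lt_sq (norm_nonneg _) (norm_nonneg _) hε0 hxy
  have hc0 : (c : ℂ) ≠ 0 := by exact_mod_cast hc.ne'
  have hcS : ‖(c : ℂ)⁻¹ • (S ^ n) y‖ < ε := by
    rw [norm_smul, norm_inv, Complex.norm_real, Real.norm_of_nonneg hc.le, inv_mul_lt_iff₀ hc]
    exact hcy
  have hcT : ‖(c : ℂ) • (T ^ n) x‖ < ε := by
    rwa [norm_smul, Complex.norm_real, Real.norm_of_nonneg hc.le]
  have hεr : ε + ε ≤ r ∧ ε + ε ≤ r' := by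
    constructor <;> linarith [min_le_left r r', min_le_right r r']
  refine ⟨x + (c : ℂ)⁻¹ • (S ^ n) y, hrU ?_, _, ⟨n, c, hn, hc0, rfl⟩, hrV ?_⟩
  · rw [Metric.mem_ball, dist_eq_norm, add_sub_right_comm]
    calc ‖x - g + (c : ℂ)⁻¹ • (S ^ n) y‖
        ≤ ‖x - g‖ + ‖(c : ℂ)⁻¹ • (S ^ n) y‖ := norm_add_le _ _
      _ < r := by linarith [dist_eq_norm' g x]
  · rw [map_add, map_smul, pow_apply_pow_of_leftInverse hTS, smul_add, smul_inv_smul₀ hc0]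
    rw [Metric.mem_ball, dist_eq_norm, add_sub_assoc]
    calc ‖(c : ℂ) • (T ^ n) x + (y - g')‖
        ≤ ‖(c : ℂ) • (T ^ n) x‖ + ‖y - g'‖ := norm_add_le _ _
      _ < r' := by linarith [dist_eq_norm' g' y]

theorem exists_lt_smul_pow_mem_of_dense (hlines : ∀ v : E, (ℂ ∙ v) ≠ ⊤) {T : E →L[ℂ] E}
    {f : E} (hf : Dense (projectiveOrbit T f)) {U : Set E} (hU : IsOpen U) (hUne : U.Nonempty)
    (M : ℕ) : ∃ n > M, ∃ c : ℂ, c ≠ 0 ∧ c • (T ^ n) f ∈ U := by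
  set L : ℕ → Set E := fun i => ((ℂ ∙ (T ^ i) f : Submodule ℂ E) : Set E)ᶜ
  have hLo : ∀ i, IsOpen (L i) := fun i => (Submodule.closed_of_finiteDimensional _).isOpen_compl
  have hLd : ∀ i, Dense (L i) := fun i => interior_eq_empty_iff_dense_compl.1 <|
    not_nonempty_iff_eq_empty.1 fun hne => hlines _ (Submodule.eq_top_of_nonempty_interior' _ hne)
  have hW : IsOpen (⋂₀ (L '' Set.Iic M)) ∧ Dense (⋂₀ (L '' Set.Iic M)) :=
    ⟨((finite_Iic M).image L).isOpen_sInter (forall_mem_image.2 fun i _ => hLo i),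
      ((finite_Iic M).image L).dense_sInter (forall_mem_image.2 fun i _ => hLo i)
        (forall_mem_image.2 fun i _ => hLd i)⟩
  obtain ⟨-, ⟨hyU, hyW⟩, n, c, hn, hc, rfl⟩ :=
    hf.inter_open_nonempty _ (hU.inter hW.1) (hW.2.inter_open_nonempty U hU hUne)
  refine ⟨n, not_le.1 fun hnM => ?_, c, hc, hyU⟩
  exact mem_sInter.1 hyW _ (mem_image_of_mem L hnM)
    (Submodule.smul_mem _ c (Submodule.mem_span_singleton_self _))

end Supercyclic

namespace ZeroAtInftyContinuousMap

variable {Ω β : Type*} [TopologicalSpace Ω] [SeminormedAddCommGroup β]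

theorem norm_apply_le (f : C₀(Ω, β)) (t : Ω) : ‖f t‖ ≤ ‖f‖ :=
  f.toBCF.norm_coe_le_norm t

theorem norm_le {f : C₀(Ω, β)} {C : ℝ} (hC : 0 ≤ C) : ‖f‖ ≤ C ↔ ∀ t, ‖f t‖ ≤ C :=
  BoundedContinuousFunction.norm_le hC

theorem norm_apply_lt_of_eq_zero {f h : C₀(Ω, β)} {ε : ℝ} (hf : ‖f - h‖ < ε) {t : Ω}
    (ht : h t = 0) : ‖f t‖ < ε := by
  simpa [ht] using (norm_apply_le (f - h) t).trans_lt hf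

theorem one_sub_le_norm_apply_of_eq_one {f h : C₀(Ω, ℂ)} {ε : ℝ} (hf : ‖f - h‖ < ε) {t : Ω}
    (ht : h t = 1) : 1 - ε ≤ ‖f t‖ := by
  have := (norm_apply_le (f - h) t).trans_lt hf
  rw [sub_apply, ht] at this
  linarith [norm_sub_norm_le (1 : ℂ) (f t), norm_sub_rev (1 : ℂ) (f t), norm_one (α := ℂ)]

theorem norm_le_sSup_image_mul {F f : C₀(Ω, β)} {g : Ω → ℝ} {K : Set Ω} (hg : Continuous g)
    (hg0 : ∀ t, 0 ≤ g t) (hK : IsCompact K) (hf : ∀ t ∉ K, f t = 0)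
    (hF : ∀ t, ∃ s, ‖F t‖ ≤ g s * ‖f s‖) : ‖F‖ ≤ sSup (g '' K) * ‖f‖ := by
  have hsup : 0 ≤ sSup (g '' K) := sSup_image_nonneg hg0
  refine (norm_le (mul_nonneg hsup (norm_nonneg f))).2 fun t => ?_
  obtain ⟨s, hs⟩ := hF t
  refine hs.trans ?_
  by_cases hsK : s ∈ K
  · exact mul_le_mul (le_csSup (hK.image hg).bddAbove (mem_image_of_mem g hsK))
      (norm_apply_le f s) (norm_nonneg _) hsup
  · rw [hf s hsK, norm_zero, mul_zero]
    exact mul_nonneg hsup (norm_nonneg f)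

variable [T2Space Ω] [LocallyCompactSpace Ω]

theorem exists_eqOn_one_eqOn_zero {s t : Set Ω} (hs : IsCompact s) (ht : IsClosed t)
    (hst : Disjoint s t) :
    ∃ h : C₀(Ω, ℂ), EqOn h 1 s ∧ EqOn h 0 t ∧ HasCompactSupport h ∧ ∀ x, ‖h x‖ ≤ 1 := by
  obtain ⟨φ, hφs, hφt, hφc, hφ01⟩ := exists_continuous_one_zero_of_isCompact hs ht hst
  have hc : HasCompactSupport (fun x => (φ x : ℂ)) := hφc.comp_left Complex.ofReal_zero
  refine ⟨⟨⟨fun x => (φ x : ℂ), by fun_prop⟩, hc.is_zero_at_infty⟩, fun x hx => ?_,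
    fun x hx => ?_, hc, fun x => ?_⟩
  · simp [hφs hx]
  · simp [hφt hx]
  · simpa [abs_le] using ⟨by linarith [(hφ01 x).1], (hφ01 x).2⟩

theorem dense_setOf_hasCompactSupport : Dense {f : C₀(Ω, ℂ) | HasCompactSupport f} := by
  refine Metric.dense_iff.2 fun f ε hε => ?_
  obtain ⟨C, hC, hfC⟩ : ∃ C, IsCompact C ∧ ∀ t ∉ C, ‖f t‖ < ε / 3 := by
    have hf0 := (zero_at_infty f).norm
    rw [norm_zero] at hf0
    have := hf0.eventually (gt_mem_nhds (by positivity : (0 : ℝ) < ε / 3))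
    obtain ⟨C, hC, h⟩ := hasBasis_cocompact.eventually_iff.1 this
    exact ⟨C, hC, fun t ht => h ht⟩
  obtain ⟨φ, hφ, -, hφc, hφ1⟩ := exists_eqOn_one_eqOn_zero hC isClosed_empty (disjoint_empty _)
  refine ⟨φ * f, ?_, hφc.mul_right⟩
  rw [Metric.mem_ball, dist_eq_norm]
  refine ((norm_le (by positivity)).2 fun t => ?_).trans_lt (by linarith : 2 * (ε / 3) < ε)
  by_cases ht : t ∈ C
  · simp [hφ ht]
    positivity
  · calc ‖(φ * f - f) t‖ = ‖φ t * f t - f t‖ := rfl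
      _ ≤ ‖φ t‖ * ‖f t‖ + ‖f t‖ := (norm_sub_le _ _).trans_eq (by rw [norm_mul])
      _ ≤ 1 * (ε / 3) + ε / 3 := by gcongr <;> first | exact hφ1 t | exact (hfC t ht).le
      _ = 2 * (ε / 3) := by ring

theorem span_singleton_ne_top [Nontrivial Ω] (v : C₀(Ω, ℂ)) : (ℂ ∙ v) ≠ ⊤ := by
  obtain ⟨t₁, t₂, hne⟩ := exists_pair_ne Ω
  obtain ⟨f₁, hf₁, hf₁', -⟩ := exists_eqOn_one_eqOn_zero isCompact_singleton
    isClosed_singleton (disjoint_singleton.2 hne)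
  obtain ⟨f₂, hf₂, -⟩ := exists_eqOn_one_eqOn_zero isCompact_singleton
    isClosed_singleton (disjoint_singleton.2 hne.symm)
  intro htop
  obtain ⟨a, ha⟩ := Submodule.mem_span_singleton.1 (htop ▸ Submodule.mem_top : f₁ ∈ ℂ ∙ v)
  obtain ⟨b, hb⟩ := Submodule.mem_span_singleton.1 (htop ▸ Submodule.mem_top : f₂ ∈ ℂ ∙ v)
  have h₁ : a * v t₁ = 1 := by simpa [hf₁ rfl] using congr($ha t₁)
  have h₂ : a * v t₂ = 0 := by simpa [hf₁' rfl] using congr($ha t₂)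
  have h₃ : b * v t₂ = 1 := by simpa [hf₂ rfl] using congr($hb t₂)
  have hv : v t₂ = 0 := (mul_eq_zero.1 h₂).resolve_left (left_ne_zero_of_mul_eq_one h₁)
  simp [hv] at h₃

end ZeroAtInftyContinuousMap

open ZeroAtInftyContinuousMap

def weightProd {Ω : Type*} (α : Ω → Ω) (w : Ω → ℝ) (n : ℕ) (t : Ω) : ℝ :=
  ∏ j ∈ range n, w (α^[j] t)

theorem weightProd_pos {Ω : Type*} {α : Ω → Ω} {w : Ω → ℝ} (hw : ∀ t, 0 < w t) (n : ℕ)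
    (t : Ω) : 0 < weightProd α w n t :=
  prod_pos fun _ _ => hw _

section WeightedComposition

variable {Ω : Type*} [TopologicalSpace Ω] {w : Ω → ℝ} {T : C₀(Ω, ℂ) →L[ℂ] C₀(Ω, ℂ)}

theorem weightProd_symm_iterate (α : Ω ≃ₜ Ω) (w : Ω → ℝ) (n : ℕ) (t : Ω) :
    weightProd α w n ((⇑α.symm)^[n] t) = ∏ j ∈ range n, w ((⇑α.symm)^[n - j] t) :=
  prod_congr rfl fun j hj => by
    rw [Function.LeftInverse.iterate_iterate_of_le α.apply_symm_apply (mem_range.1 hj).le]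

theorem weightedComp_pow_apply {α : Ω → Ω} (hT : ∀ f t, T f t = (w t : ℂ) * f (α t)) (n : ℕ)
    (f : C₀(Ω, ℂ)) (t : Ω) : (T ^ n) f t = weightProd α w n t * f (α^[n] t) := by
  induction n generalizing f with
  | zero => simp [weightProd]
  | succ n ih =>
    rw [pow_succ, mul_apply_eq_comp, ih, hT, weightProd, weightProd, prod_range_succ,
      Function.iterate_succ_apply']
    push_cast
    ring

theorem norm_weightedComp_pow_apply {α : Ω → Ω} (hw : ∀ t, 0 < w t)
    (hT : ∀ f t, T f t = (w t : ℂ) * f (α t)) (n : ℕ) (f : C₀(Ω, ℂ)) (t : Ω) :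
    ‖(T ^ n) f t‖ = weightProd α w n t * ‖f (α^[n] t)‖ := by
  rw [weightedComp_pow_apply hT, norm_mul, Complex.norm_real,
    Real.norm_of_nonneg (weightProd_pos hw n t).le]

theorem norm_rightInverse_pow_apply {α : Ω → Ω} (hw : ∀ t, 0 < w t)
    (hT : ∀ f t, T f t = (w t : ℂ) * f (α t)) {S : C₀(Ω, ℂ) →L[ℂ] C₀(Ω, ℂ)}
    (hTS : ∀ f, T (S f) = f) (n : ℕ) (f : C₀(Ω, ℂ)) (t : Ω) :
    ‖(S ^ n) f (α^[n] t)‖ = (weightProd α w n t)⁻¹ * ‖f t‖ := by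
  have h := norm_weightedComp_pow_apply hw hT n ((S ^ n) f) t
  rw [pow_apply_pow_of_leftInverse hTS] at h
  rw [h, inv_mul_cancel_left₀ (weightProd_pos hw n t).ne']

variable (α : Ω ≃ₜ Ω)

theorem norm_weightedComp_pow_le (hw_cont : Continuous w) (hw : ∀ t, 0 < w t)
    (hT : ∀ f t, T f t = (w t : ℂ) * f (α t)) (n : ℕ) {K : Set Ω} (hK : IsCompact K)
    {f : C₀(Ω, ℂ)} (hf : ∀ t ∉ K, f t = 0) :
    ‖(T ^ n) f‖ ≤ sSup ((fun t => ∏ j ∈ range n, w ((⇑α.symm)^[n - j] t)) '' K) * ‖f‖ := by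
  refine norm_le_sSup_image_mul (by fun_prop) (fun t => prod_nonneg fun j _ => (hw _).le) hK hf
    fun t => ⟨α^[n] t, le_of_eq ?_⟩
  rw [← weightProd_symm_iterate, Function.LeftInverse.iterate α.symm_apply_apply,
    norm_weightedComp_pow_apply hw hT]

theorem norm_rightInverse_pow_le (hw_cont : Continuous w) (hw : ∀ t, 0 < w t)
    (hT : ∀ f t, T f t = (w t : ℂ) * f (α t)) {S : C₀(Ω, ℂ) →L[ℂ] C₀(Ω, ℂ)}
    (hTS : ∀ f, T (S f) = f) (n : ℕ) {K : Set Ω} (hK : IsCompact K)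
    {f : C₀(Ω, ℂ)} (hf : ∀ t ∉ K, f t = 0) :
    ‖(S ^ n) f‖ ≤ sSup ((fun t => ∏ j ∈ range n, (w ((⇑α)^[j] t))⁻¹) '' K) * ‖f‖ := by
  have hcont : Continuous fun t => ∏ j ∈ range n, (w ((⇑α)^[j] t))⁻¹ :=
    continuous_finsetProd _ fun j _ =>
      (hw_cont.comp (α.continuous.iterate j)).inv₀ fun t => (hw _).ne'
  refine norm_le_sSup_image_mul hcont (fun t => prod_nonneg fun j _ => (inv_pos.2 (hw _)).le)
    hK hf fun s => ?_
  obtain ⟨t, rfl⟩ := (α.surjective.iterate n) s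
  exact ⟨t, le_of_eq <| by rw [norm_rightInverse_pow_apply hw hT hTS, weightProd, prod_inv_distrib]⟩

theorem isSupercyclic_of_weight_condition [T2Space Ω] [LocallyCompactSpace Ω]
    [TopologicalSpace.SeparableSpace C₀(Ω, ℂ)] (hw_cont : Continuous w) (hw : ∀ t, 0 < w t)
    (hT : ∀ f t, T f t = (w t : ℂ) * f (α t)) {S : C₀(Ω, ℂ) →L[ℂ] C₀(Ω, ℂ)}
    (hTS : ∀ f, T (S f) = f)
    (hcond : ∀ K : Set Ω, IsCompact K → ∃ n : ℕ → ℕ, (∀ k, 1 ≤ n k) ∧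
      Tendsto (fun k =>
          sSup ((fun t => ∏ j ∈ range (n k), w ((⇑α.symm)^[n k - j] t)) '' K) *
          sSup ((fun t => ∏ j ∈ range (n k), (w ((⇑α)^[j] t))⁻¹) '' K))
        atTop (𝓝 0)) :
    IsSupercyclic T := by
  refine isSupercyclic_of_norm_mul_norm_lt hTS dense_setOf_hasCompactSupport
    fun x hx y hy δ hδ => ?_
  have hvanish {f : C₀(Ω, ℂ)} {K : Set Ω} (hK : tsupport f ⊆ K) : ∀ t ∉ K, f t = 0 :=
    fun t ht => image_eq_zero_of_notMem_tsupport fun h => ht (hK h)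
  have hK : IsCompact (tsupport x ∪ tsupport y) := hx.union hy
  obtain ⟨n, hn, hlim⟩ := hcond _ hK
  obtain ⟨k, hk⟩ := ((hlim.mul_const (‖x‖ * ‖y‖)).eventually
    (gt_mem_nhds (by rwa [zero_mul]))).exists
  have hTx := norm_weightedComp_pow_le α hw_cont hw hT (n k) hK (hvanish subset_union_left)
  have hSy := norm_rightInverse_pow_le α hw_cont hw hT hTS (n k) hK
    (hvanish subset_union_right)
  refine ⟨n k, hn k, lt_of_le_of_lt ?_ hk⟩
  calc ‖(T ^ n k) x‖ * ‖(S ^ n k) y‖ ≤ _ * _ :=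
        mul_le_mul hTx hSy (norm_nonneg _) ((norm_nonneg _).trans hTx)
    _ = _ := by ring

end WeightedComposition

section Necessity

variable {Ω : Type*} [TopologicalSpace Ω] (α : Ω ≃ₜ Ω) {w : Ω → ℝ}
  {T : C₀(Ω, ℂ) →L[ℂ] C₀(Ω, ℂ)} {f h : C₀(Ω, ℂ)} {c : ℂ} {ε : ℝ} {n : ℕ}

theorem iterate_notMem_of_image_inter_eq_empty {K : Set Ω} (hK : (⇑α)^[n] '' K ∩ K = ∅)
    {t : Ω} (ht : t ∈ K) : (⇑α)^[n] t ∉ K ∧ (⇑α.symm)^[n] t ∉ K :=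
  ⟨fun h => hK.subset ⟨mem_image_of_mem _ ht, h⟩,
    fun h => hK.subset ⟨⟨_, h, Function.LeftInverse.iterate α.apply_symm_apply n t⟩, ht⟩⟩

variable (hw : ∀ t, 0 < w t) (hT : ∀ f t, T f t = (w t : ℂ) * f (α t))
include hw hT

theorem weightProd_symm_iterate_le (hε : ε < 1) (hc : c ≠ 0) (hf : ‖f - h‖ < ε)
    (hcf : ‖c • (T ^ n) f - h‖ < ε) {t : Ω} (ht : h t = 1) (hs : h ((⇑α.symm)^[n] t) = 0) :
    weightProd α w n ((⇑α.symm)^[n] t) ≤ ε / ((1 - ε) * ‖c‖) := by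
  have horbit := norm_apply_lt_of_eq_zero hcf hs
  rw [ZeroAtInftyContinuousMap.smul_apply, norm_smul, norm_weightedComp_pow_apply hw hT,
    Function.LeftInverse.iterate α.apply_symm_apply] at horbit
  have hc' : 0 < ‖c‖ := norm_pos_iff.2 hc
  rw [le_div_iff₀ (mul_pos (by linarith) hc')]
  calc weightProd α w n ((⇑α.symm)^[n] t) * ((1 - ε) * ‖c‖)
      = ‖c‖ * (weightProd α w n ((⇑α.symm)^[n] t) * (1 - ε)) := by ring
    _ ≤ ‖c‖ * (weightProd α w n ((⇑α.symm)^[n] t) * ‖f t‖) :=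
        mul_le_mul_of_nonneg_left (mul_le_mul_of_nonneg_left (one_sub_le_norm_apply_of_eq_one hf ht)
          (weightProd_pos hw n _).le) hc'.le
    _ ≤ ε := horbit.le

theorem inv_weightProd_le (hε : ε < 1) (hf : ‖f - h‖ < ε) (hcf : ‖c • (T ^ n) f - h‖ < ε)
    {t : Ω} (ht : h t = 1) (hs : h ((⇑α)^[n] t) = 0) :
    (weightProd α w n t)⁻¹ ≤ ‖c‖ * ε / (1 - ε) := by
  have horbit := one_sub_le_norm_apply_of_eq_one hcf ht
  rw [ZeroAtInftyContinuousMap.smul_apply, norm_smul, norm_weightedComp_pow_apply hw hT] at horbit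
  have hP := weightProd_pos (α := α) hw n t
  rw [le_div_iff₀ (by linarith), inv_mul_le_iff₀ hP]
  calc 1 - ε ≤ ‖c‖ * (weightProd α w n t * ‖f ((⇑α)^[n] t)‖) := horbit
    _ ≤ ‖c‖ * (weightProd α w n t * ε) :=
        mul_le_mul_of_nonneg_left (mul_le_mul_of_nonneg_left (norm_apply_lt_of_eq_zero hf hs).le hP.le)
          (norm_nonneg c)
    _ = weightProd α w n t * (‖c‖ * ε) := by ring

theorem sSup_prod_mul_sSup_prod_inv_le (hε0 : 0 < ε) (hε : ε < 1) (hc : c ≠ 0) (hf : ‖f - h‖ < ε)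
    (hcf : ‖c • (T ^ n) f - h‖ < ε) {K : Set Ω} (hK : ∀ t ∈ K, h t = 1)
    (hKn : ∀ t ∈ K, h ((⇑α)^[n] t) = 0 ∧ h ((⇑α.symm)^[n] t) = 0) :
    sSup ((fun t => ∏ j ∈ range n, w ((⇑α.symm)^[n - j] t)) '' K) *
      sSup ((fun t => ∏ j ∈ range n, (w ((⇑α)^[j] t))⁻¹) '' K) ≤ (ε / (1 - ε)) ^ 2 := by
  have hε' : 0 < 1 - ε := by linarith
  have hc' : 0 < ‖c‖ := norm_pos_iff.2 hc
  have hA : sSup ((fun t => ∏ j ∈ range n, w ((⇑α.symm)^[n - j] t)) '' K) ≤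
      ε / ((1 - ε) * ‖c‖) := Real.sSup_le (forall_mem_image.2 fun t ht => by
        rw [← weightProd_symm_iterate]
        exact weightProd_symm_iterate_le α hw hT hε hc hf hcf (hK t ht) (hKn t ht).2)
      (by positivity)
  have hB : sSup ((fun t => ∏ j ∈ range n, (w ((⇑α)^[j] t))⁻¹) '' K) ≤ ‖c‖ * ε / (1 - ε) :=
    Real.sSup_le (forall_mem_image.2 fun t ht => by
        rw [prod_inv_distrib]
        exact inv_weightProd_le α hw hT hε hf hcf (hK t ht) (hKn t ht).1)
      (by positivity)
  calc _ ≤ ε / ((1 - ε) * ‖c‖) * (‖c‖ * ε / (1 - ε)) :=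
        mul_le_mul hA hB (sSup_image_nonneg fun t => prod_nonneg fun j _ => (inv_pos.2 (hw _)).le)
          (by positivity)
    _ = (ε / (1 - ε)) ^ 2 := by field_simp

theorem weight_condition_of_isSupercyclic [T2Space Ω] [LocallyCompactSpace Ω] [Nontrivial Ω]
    (haper : ∀ K : Set Ω, IsCompact K → ∃ N : ℕ, 0 < N ∧ ∀ n ≥ N, ((⇑α)^[n] '' K) ∩ K = ∅)
    (hsc : IsSupercyclic T) {K : Set Ω} (hK : IsCompact K) :
    ∃ n : ℕ → ℕ, StrictMono n ∧ (∀ k, 1 ≤ n k) ∧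
      Tendsto (fun k =>
          sSup ((fun t => ∏ j ∈ range (n k), w ((⇑α.symm)^[n k - j] t)) '' K) *
          sSup ((fun t => ∏ j ∈ range (n k), (w ((⇑α)^[j] t))⁻¹) '' K))
        atTop (𝓝 0) := by
  obtain ⟨h, hK1, -, hh, -⟩ := exists_eqOn_one_eqOn_zero hK isClosed_empty (disjoint_empty _)
  obtain ⟨N, -, hN⟩ := haper _ hh
  have hKh : K ⊆ tsupport h := fun t ht => subset_tsupport h (by simp [hK1 ht])
  refine exists_strictMono_tendsto_zero (G := fun m =>
    sSup ((fun t => ∏ j ∈ range m, w ((⇑α.symm)^[m - j] t)) '' K) *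
      sSup ((fun t => ∏ j ∈ range m, (w ((⇑α)^[j] t))⁻¹) '' K)) (fun n => mul_nonneg
    (sSup_image_nonneg fun t => prod_nonneg fun j _ => (hw _).le)
    (sSup_image_nonneg fun t => prod_nonneg fun j _ => (inv_pos.2 (hw _)).le)) fun δ hδ M => ?_
  obtain ⟨ε, hεδ, hε0, hε1⟩ : ∃ ε : ℝ, (ε / (1 - ε)) ^ 2 < δ ∧ 0 < ε ∧ ε < 1 := by
    have hcont : ContinuousAt (fun ε : ℝ => (ε / (1 - ε)) ^ 2) 0 := by fun_prop (disch := norm_num)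
    have hlim := hcont.tendsto.mono_left (nhdsWithin_le_nhds (s := Ioi 0))
    norm_num at hlim
    exact ((hlim.eventually (gt_mem_nhds hδ)).and (Ioo_mem_nhdsGT one_pos)).exists
  obtain ⟨f, hfsc, hf⟩ := Dense.exists_dist_lt hsc h hε0
  obtain ⟨n, hn, c, hc, hcf⟩ := exists_lt_smul_pow_mem_of_dense span_singleton_ne_top hfsc
    Metric.isOpen_ball ⟨h, Metric.mem_ball_self hε0⟩ (max M N)
  rw [dist_comm, dist_eq_norm] at hf
  rw [Metric.mem_ball, dist_eq_norm] at hcf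
  refine ⟨n, (le_max_left M N).trans_lt hn,
    (sSup_prod_mul_sSup_prod_inv_le α hw hT hε0 hε1 hc hf hcf hK1 fun t ht => ?_).trans_lt hεδ⟩
  have hout := iterate_notMem_of_image_inter_eq_empty α
    (hN n ((le_max_right M N).trans hn.le)) (hKh ht)
  exact ⟨image_eq_zero_of_notMem_tsupport hout.1, image_eq_zero_of_notMem_tsupport hout.2⟩

end Necessity

theorem supercyclic_iff_weight_condition_C0_general
    {Ω : Type*} [TopologicalSpace Ω] [LocallyCompactSpace Ω] [T2Space Ω]
    [NoncompactSpace Ω] [TopologicalSpace.SeparableSpace C₀(Ω, ℂ)]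
    (α : Ω ≃ₜ Ω)
    (haper : ∀ K : Set Ω, IsCompact K →
      ∃ N : ℕ, 0 < N ∧ ∀ n ≥ N, ((⇑α)^[n] '' K) ∩ K = ∅)
    (w : Ω → ℝ) (hw_cont : Continuous w) (hw_pos : ∀ t, 0 < w t)
    (T S : C₀(Ω, ℂ) →L[ℂ] C₀(Ω, ℂ))
    (hT : ∀ (f : C₀(Ω, ℂ)) (t : Ω), T f t = (w t : ℂ) * f (α t))
    (hTS : ∀ f, T (S f) = f) :
    IsSupercyclic T ↔
      ∀ K : Set Ω, IsCompact K →
        ∃ n : ℕ → ℕ, StrictMono n ∧ (∀ k, 1 ≤ n k) ∧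
          Tendsto (fun k =>
              sSup ((fun t => ∏ j ∈ range (n k), w ((⇑α.symm)^[n k - j] t)) '' K) *
              sSup ((fun t => ∏ j ∈ range (n k), (w ((⇑α)^[j] t))⁻¹) '' K))
            atTop (nhds 0) := by
  have : Nontrivial Ω := by
    have : Infinite Ω := not_finite_iff_infinite.1 fun _ => noncompact_univ Ω isCompact_univ
    infer_instance
  refine ⟨fun hsc K hK => weight_condition_of_isSupercyclic α hw_pos hT haper hsc hK,
    fun hcond => isSupercyclic_of_weight_condition α hw_cont hw_pos hT hTS fun K hK => ?_⟩
  obtain ⟨n, -, hn, hlim⟩ := hcond K hK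
  exact ⟨n, hn, hlim⟩

theorem supercyclic_iff_weight_condition_C0
    {Ω : Type*} [TopologicalSpace Ω] [LocallyCompactSpace Ω] [T2Space Ω]
    [NoncompactSpace Ω] [TopologicalSpace.SeparableSpace C₀(Ω, ℂ)]
    (α : Ω ≃ₜ Ω)
    (haper : ∀ K : Set Ω, IsCompact K →
      ∃ N : ℕ, 0 < N ∧ ∀ n ≥ N, ((⇑α)^[n] '' K) ∩ K = ∅)
    (w : Ω → ℝ) (hw_cont : Continuous w) (hw_pos : ∀ t, 0 < w t)
    (hw_bdd : ∃ C, ∀ t, w t ≤ C) (hw_inv_bdd : ∃ C, ∀ t, (w t)⁻¹ ≤ C)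
    (T S : C₀(Ω, ℂ) →L[ℂ] C₀(Ω, ℂ))
    (hT : ∀ (f : C₀(Ω, ℂ)) (t : Ω), T f t = (w t : ℂ) * f (α t))
    (hST : ∀ f, S (T f) = f) (hTS : ∀ f, T (S f) = f) :
    IsSupercyclic T ↔
      ∀ K : Set Ω, IsCompact K →
        ∃ n : ℕ → ℕ, StrictMono n ∧ (∀ k, 1 ≤ n k) ∧
          Tendsto (fun k =>
              sSup ((fun t => ∏ j ∈ range (n k), w ((⇑α.symm)^[n k - j] t)) '' K) *
              sSup ((fun t => ∏ j ∈ range (n k), (w ((⇑α)^[j] t))⁻¹) '' K))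
            atTop (nhds 0) :=
  supercyclic_iff_weight_condition_C0_general α haper w hw_cont hw_pos T S hT hTS
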